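/- LP^{→,F} has an internalized notion of logical equivalence: for all formulas A and B, A ≡ B if and only if ⊨ (A ↔ B) ∧ (¬A ↔ ¬B). -/
import Mathlib


/-- The three truth values: true, false, both-true-and-false. -/
inductive TV : Type
  | t : TV
  | f : TV
  | b : TV
  deriving DecidableEq

/-- Formulas of LP^{→,F}: propositional variables, falsity constant,
    negation, conjunction, disjunction, implication. -/
inductive Fm : Type
  | var : ℕ → Fm
  | fls : Fm
  | neg : Fm → Fm
  | conj : Fm → Fm → Fm
  | disj : Fm → Fm → Fm
  | impl : Fm → Fm → Fm
  deriving DecidableEq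

/-- The LP^{→,F} negation truth function. -/
def TV.negLP : TV → TV
  | .t => .f
  | .f => .t
  | .b => .b

/-- The LP^{→,F} conjunction truth function. -/
def TV.andLP : TV → TV → TV
  | .f, _ => .f
  | _, .f => .f
  | .t, .t => .t
  | _, _ => .b

/-- The LP^{→,F} disjunction truth function. -/
def TV.orLP : TV → TV → TV
  | .t, _ => .t
  | _, .t => .t
  | .f, .f => .f
  | _, _ => .b

/-- The LP^{→,F} implication truth function: t if the antecedent is f,
    otherwise the value of the consequent. -/
def TV.implLP : TV → TV → TV
  | .f, _ => .t
  | _, y => y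

/-- A valuation for LP^{→,F}. -/
def IsValuation (ν : Fm → TV) : Prop :=
  ν .fls = .f ∧
  (∀ A, ν (.neg A) = (ν A).negLP) ∧
  (∀ A B, ν (.conj A B) = (ν A).andLP (ν B)) ∧
  (∀ A B, ν (.disj A B) = (ν A).orLP (ν B)) ∧
  (∀ A B, ν (.impl A B) = (ν A).implLP (ν B))

/-- Logical equivalence in LP^{→,F}. -/
def LEquiv (A B : Fm) : Prop := ∀ ν : Fm → TV, IsValuation ν → ν A = ν B

/-- The truth constant T, an abbreviation for ¬F. -/
def Fm.tru : Fm := .neg .fls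

/-- A truth value is designated iff it is t or ⊤. -/
def Designated (v : TV) : Prop := v = .t ∨ v = .b

/-- Semantic logical consequence in LP^{→,F}. -/
def LPCons (Γ : Set Fm) (A : Fm) : Prop :=
  ∀ ν : Fm → TV, IsValuation ν → ((∃ B ∈ Γ, ν B = .f) ∨ Designated (ν A))

/-- Validity in LP^{→,F}. -/
def LPValid (A : Fm) : Prop := ∀ ν : Fm → TV, IsValuation ν → Designated (ν A)

/-- Bi-implication: A ↔ B stands for (A → B) ∧ (B → A). -/
def Fm.biimpl (A B : Fm) : Fm := (A.impl B).conj (B.impl A)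

/-- LP^{→,F} has an internalized notion of logical equivalence. -/
theorem lp_internalized_equivalence :
    ∀ A B : Fm,
      LEquiv A B ↔ LPValid ((A.biimpl B).conj (A.neg.biimpl B.neg)) := by
  intro A B
  constructor
  · intro h ν hv
    obtain ⟨hf, hn, hc, hd, hi⟩ := hv
    have hab := h ν ⟨hf, hn, hc, hd, hi⟩
    simp only [Fm.biimpl, hc, hi, hn, hab]
    cases ν B <;> simp [Designated, TV.implLP, TV.andLP, TV.negLP]
  · intro h ν hv
    have hd := h ν hv
    obtain ⟨hf, hn, hc, hdj, hi⟩ := hv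
    simp only [Fm.biimpl, hc, hi, hn] at hd
    rcases hd with hd | hd <;>
      cases hA : ν A <;> cases hB : ν B <;> simp_all [TV.implLP, TV.andLP, TV.negLP]
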